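/- A Harder–Narasimhan filtration with respect to a stability function is unique: if 0 = E₀ ⊆ E₁ ⊆ ... ⊆ Eₙ = E and 0 = E₀' ⊆ E₁' ⊆ ... ⊆ Eₘ' = E are two filtrations of an object E in an abelian category such that all quotients Fᵢ = Eᵢ/Eᵢ₋₁ and Fⱼ' = Eⱼ'/Eⱼ₋₁' are semistable with strictly decreasing slopes μ(F₁) > ... > μ(Fₙ) and μ(F₁') > ... > μ(Fₘ'), then n = m and Eᵢ = Eᵢ' for all i. -/

import Mathlib

open CategoryTheory CategoryTheory.Limits

universe v u

variable {C : Type u} [Category.{v} C] [Abelian C]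

/-- The slope `d/r`, with value `⊤` when `r = 0`. -/
noncomputable def slopeOf (r d : C → ℝ) (E : C) : EReal :=
  if r E = 0 then ⊤ else ((d E / r E : ℝ) : EReal)

/-- `f` is additive on short exact sequences (i.e. factors through `K(A)`). -/
def AdditiveOnSES {C : Type u} [Category.{v} C] [Abelian C] (f : C → ℝ) : Prop :=
  ∀ (S : ShortComplex C), S.ShortExact → f S.X₂ = f S.X₁ + f S.X₃

/-- `E` is semistable for the slope `μ`: every nonzero proper subobject has slope `≤ μ E`. -/
def Semistable (μ : C → EReal) (E : C) : Prop :=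
  ∀ (F : C) (ι : F ⟶ E), Mono ι → ¬ IsZero F → ¬ IsIso ι → μ F ≤ μ E

/-- The `i`-th factor `Eᵢ₊₁/Eᵢ` of a filtration of `E` by subobjects. -/
noncomputable def factor {E : C} {n : ℕ} (s : Fin (n + 1) → Subobject E)
    (hs : Monotone s) (i : Fin n) : C :=
  cokernel (Subobject.ofLE (s i.castSucc) (s i.succ) (hs (Fin.castSucc_lt_succ : i.castSucc < i.succ).le))

/-- `s` is a Harder–Narasimhan filtration of `E` with respect to the slope `μ`. -/
def IsHNFiltration (μ : C → EReal) {E : C} {n : ℕ} (s : Fin (n + 1) → Subobject E)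
    (hs : Monotone s) : Prop :=
  s 0 = ⊥ ∧ s (Fin.last n) = ⊤ ∧
  (∀ i : Fin n, ¬ IsZero (factor s hs i) ∧ Semistable μ (factor s hs i)) ∧
  (∀ i j : Fin n, i < j → μ (factor s hs j) < μ (factor s hs i))

/-! ### Auxiliary lemmas -/

section Aux

lemma HN.shortExact_mono {A B : C} (f : A ⟶ B) [Mono f] :
    (ShortComplex.mk f (cokernel.π f) (cokernel.condition f)).ShortExact :=
  { exact := ShortComplex.exact_of_g_is_cokernel _ (cokernelIsCokernel f) }

lemma HN.shortExact_epi {G Q : C} (π : G ⟶ Q) [Epi π] :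
    (ShortComplex.mk (kernel.ι π) π (kernel.condition π)).ShortExact :=
  { exact := ShortComplex.exact_of_f_is_kernel _ (kernelIsKernel π) }

lemma HN.rank_of_isZero (r : C → ℝ) (hradd : AdditiveOnSES r) {X : C} (hX : IsZero X) :
    r X = 0 := by
  have hz : (𝟙 X) ≫ (𝟙 X) = 0 := hX.eq_of_src _ _
  have hS : (ShortComplex.mk (𝟙 X) (𝟙 X) hz).ShortExact :=
    { exact := ShortComplex.exact_of_isZero_X₂ _ hX }
  have h := hradd _ hS
  dsimp at h
  linarith

lemma HN.rank_iso (r : C → ℝ) (hradd : AdditiveOnSES r) {X Y : C} (e : X ≅ Y) :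
    r X = r Y := by
  have h := hradd _ (HN.shortExact_mono e.hom)
  have h0 : IsZero (cokernel e.hom) := (isZero_zero C).of_iso (cokernel.ofEpi e.hom)
  dsimp at h
  rw [HN.rank_of_isZero r hradd h0] at h
  linarith

lemma HN.slope_iso (r d : C → ℝ) (hradd : AdditiveOnSES r) (hdadd : AdditiveOnSES d)
    {X Y : C} (e : X ≅ Y) : slopeOf r d X = slopeOf r d Y := by
  unfold slopeOf
  rw [HN.rank_iso r hradd e, HN.rank_iso d hdadd e]

lemma HN.slope_le_iff (r d : C → ℝ) (hr : ∀ E : C, 0 ≤ r E)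
    (hd : ∀ E : C, ¬ IsZero E → r E = 0 → 0 < d E)
    {X Y : C} (hX : ¬ IsZero X) (hY : ¬ IsZero Y) :
    slopeOf r d X ≤ slopeOf r d Y ↔ d X * r Y ≤ d Y * r X := by
  unfold slopeOf
  by_cases hx : r X = 0 <;> by_cases hy : r Y = 0
  · simp [hx, hy]
  · have hdX := hd X hX hx
    have hry : 0 < r Y := lt_of_le_of_ne (hr Y) (Ne.symm hy)
    rw [if_pos hx, if_neg hy]
    simp only [top_le_iff]
    constructor
    · intro h; exact absurd h (EReal.coe_ne_top _)
    · intro h; rw [hx, mul_zero] at h; nlinarith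
  · have hdY := hd Y hY hy
    have hrx : 0 < r X := lt_of_le_of_ne (hr X) (Ne.symm hx)
    rw [if_neg hx, if_pos hy]
    simp only [le_top, true_iff]
    rw [hy, mul_zero]
    positivity
  · have hrx : 0 < r X := lt_of_le_of_ne (hr X) (Ne.symm hx)
    have hry : 0 < r Y := lt_of_le_of_ne (hr Y) (Ne.symm hy)
    rw [if_neg hx, if_neg hy, EReal.coe_le_coe_iff]
    exact div_le_div_iff₀ hrx hry

variable (r d : C → ℝ) (hradd : AdditiveOnSES r) (hdadd : AdditiveOnSES d)
    (hr : ∀ E : C, 0 ≤ r E) (hd : ∀ E : C, ¬ IsZero E → r E = 0 → 0 < d E)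

include hradd hdadd hr hd

/-- A nonzero subobject of a semistable object has slope at most that of the object. -/
lemma HN.slope_le_of_mono {I F : C} (ι : I ⟶ F) [Mono ι] (hI : ¬ IsZero I)
    (hFss : Semistable (slopeOf r d) F) : slopeOf r d I ≤ slopeOf r d F := by
  by_cases h : IsIso ι
  · exact le_of_eq (HN.slope_iso r d hradd hdadd (asIso ι))
  · exact hFss I ι inferInstance hI h

/-- A nonzero quotient of a semistable object has slope at least that of the object. -/
lemma HN.slope_le_of_epi {G Q : C} (π : G ⟶ Q) [Epi π] (hG : ¬ IsZero G) (hQ : ¬ IsZero Q)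
    (hGss : Semistable (slopeOf r d) G) : slopeOf r d G ≤ slopeOf r d Q := by
  have hSE := HN.shortExact_epi π
  have hR := hradd _ hSE
  have hD := hdadd _ hSE
  dsimp at hR hD
  rw [HN.slope_le_iff r d hr hd hG hQ]
  by_cases hK : IsZero (kernel π)
  · rw [HN.rank_of_isZero r hradd hK] at hR
    rw [HN.rank_of_isZero d hdadd hK] at hD
    rw [hR, hD]
    ring_nf
    exact le_refl _
  · have hni : ¬ IsIso (kernel.ι π) := by
      intro h
      have hπ : π = 0 := by
        haveI := h
        rw [← cancel_epi (kernel.ι π), comp_zero]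
        exact kernel.condition π
      apply hQ
      rw [IsZero.iff_id_eq_zero, ← cancel_epi π, comp_zero, hπ, zero_comp]
    have hle := hGss (kernel π) (kernel.ι π) inferInstance hK hni
    rw [HN.slope_le_iff r d hr hd hK hG] at hle
    rw [hR, hD] at hle ⊢
    nlinarith [hle]

/-- A nonzero morphism between nonzero semistable objects is slope-nondecreasing. -/
lemma HN.slope_le_of_hom {Q F : C} (f : Q ⟶ F) (hf : f ≠ 0)
    (hQ : ¬ IsZero Q) (hF : ¬ IsZero F)
    (hQss : Semistable (slopeOf r d) Q) (hFss : Semistable (slopeOf r d) F) :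
    slopeOf r d Q ≤ slopeOf r d F := by
  have hI : ¬ IsZero (Abelian.image f) := by
    intro h
    apply hf
    rw [← Abelian.image.fac f, h.eq_of_tgt (Abelian.factorThruImage f) 0, zero_comp]
  have h1 : slopeOf r d Q ≤ slopeOf r d (Abelian.image f) :=
    HN.slope_le_of_epi r d hradd hdadd hr hd (Abelian.factorThruImage f) hQ hI hQss
  have h2 : slopeOf r d (Abelian.image f) ≤ slopeOf r d F :=
    HN.slope_le_of_mono r d hradd hdadd hr hd (Abelian.image.ι f) hI hFss
  exact h1.trans h2

omit hradd hdadd hr hd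

/-- A nonzero factor forces a strict step in the filtration. -/
lemma HN.lt_of_factor_nonzero {E : C} {n : ℕ} (s : Fin (n + 1) → Subobject E)
    (hs : Monotone s) (i : Fin n) (h : ¬ IsZero (factor s hs i)) :
    s i.castSucc < s i.succ := by
  rcases lt_or_eq_of_le (hs (Fin.castSucc_lt_succ : i.castSucc < i.succ).le) with h' | h'
  · exact h'
  · exfalso
    apply h
    haveI : IsIso (Subobject.ofLE (s i.castSucc) (s i.succ) (hs (Fin.castSucc_lt_succ : i.castSucc < i.succ).le)) := by
      refine ⟨Subobject.ofLE (s i.succ) (s i.castSucc) h'.ge, ?_, ?_⟩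
      · rw [Subobject.ofLE_comp_ofLE]; exact Subobject.ofLE_refl _
      · rw [Subobject.ofLE_comp_ofLE]; exact Subobject.ofLE_refl _
    exact (isZero_zero C).of_iso (cokernel.ofEpi _)

include hradd hdadd hr hd

/-- **Key lemma.** If `A ≤ B` are subobjects with `B/A` nonzero semistable, `A ≤ s t` and
`B ≰ s t` for an HN filtration `s`, then `μ(B/A)` is at most the slope of some factor of `s`
of index `≥ t`. -/
lemma HN.key {E : C} {n : ℕ} (s : Fin (n + 1) → Subobject E) (hs : Monotone s)
    (hHN : IsHNFiltration (slopeOf r d) s hs)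
    (A B : Subobject E) (hAB : A ≤ B)
    (hQ0 : ¬ IsZero (cokernel (Subobject.ofLE A B hAB)))
    (hQss : Semistable (slopeOf r d) (cokernel (Subobject.ofLE A B hAB)))
    (t : Fin (n + 1)) (hAt : A ≤ s t) (hBt : ¬ B ≤ s t) :
    ∃ k : Fin n, (t : ℕ) ≤ (k : ℕ) ∧
      slopeOf r d (cokernel (Subobject.ofLE A B hAB)) ≤ slopeOf r d (factor s hs k) := by
  classical
  have hex : ∃ j : ℕ, ∃ hj : j < n + 1, B ≤ s ⟨j, hj⟩ := by
    refine ⟨n, Nat.lt_succ_self n, ?_⟩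
    have htop : s ⟨n, Nat.lt_succ_self n⟩ = ⊤ := hHN.2.1
    rw [htop]; exact le_top
  obtain ⟨hjlt, hBj⟩ := Nat.find_spec hex
  set j := Nat.find hex with hjdef
  have htj : (t : ℕ) < j := by
    by_contra hcon
    push_neg at hcon
    exact hBt (le_trans hBj (hs (show (⟨j, hjlt⟩ : Fin (n + 1)) ≤ t from hcon)))
  have hjn : j ≤ n := Nat.lt_succ_iff.mp hjlt
  have hkn : j - 1 < n := by omega
  set k : Fin n := ⟨j - 1, hkn⟩ with hkdef
  have hBk : B ≤ s k.succ := by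
    have : k.succ = (⟨j, hjlt⟩ : Fin (n + 1)) := by
      apply Fin.ext; simp [hkdef]; omega
    rw [this]; exact hBj
  have hnBk : ¬ B ≤ s k.castSucc := by
    intro hB
    exact Nat.find_min hex (m := j - 1) (by omega) ⟨by omega, hB⟩
  have hAk : A ≤ s k.castSucc := by
    refine hAt.trans (hs ?_)
    show (t : ℕ) ≤ j - 1
    omega
  -- the construction
  set ι := Subobject.ofLE (s k.castSucc) (s k.succ) (hs (Fin.castSucc_lt_succ : k.castSucc < k.succ).le) with hιdef
  set g := Subobject.ofLE B (s k.succ) hBk with hgdef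
  have hSE := HN.shortExact_mono ι
  have hφ : g ≫ cokernel.π ι ≠ 0 := by
    intro h0
    apply hnBk
    have hlf : hSE.exact.lift g h0 ≫ ι = g := hSE.exact.lift_f g h0
    refine Subobject.le_of_comm (hSE.exact.lift g h0) ?_
    rw [← Subobject.ofLE_arrow (hs (Fin.castSucc_lt_succ : k.castSucc < k.succ).le), ← Category.assoc, hlf,
      Subobject.ofLE_arrow]
  have hA0 : Subobject.ofLE A B hAB ≫ (g ≫ cokernel.π ι) = 0 := by
    have e1 : Subobject.ofLE A B hAB ≫ g =
        Subobject.ofLE A (s k.castSucc) hAk ≫ ι := by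
      rw [hgdef, hιdef, Subobject.ofLE_comp_ofLE, Subobject.ofLE_comp_ofLE]
    rw [← Category.assoc, e1, Category.assoc, cokernel.condition, comp_zero]
  have hψ : cokernel.desc (Subobject.ofLE A B hAB) (g ≫ cokernel.π ι) hA0 ≠ 0 := by
    intro h0
    apply hφ
    rw [← cokernel.π_desc (Subobject.ofLE A B hAB) (g ≫ cokernel.π ι) hA0, h0, comp_zero]
  refine ⟨k, by show (t : ℕ) ≤ j - 1; omega, ?_⟩
  exact HN.slope_le_of_hom r d hradd hdadd hr hd
    (cokernel.desc (Subobject.ofLE A B hAB) (g ≫ cokernel.π ι) hA0) hψ hQ0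
    (hHN.2.2.1 k).1 hQss (hHN.2.2.1 k).2

/-- Comparison of the slopes of the `t`-th factors of two HN filtrations agreeing up to `t`. -/
lemma HN.slope_step {E : C} {n m : ℕ}
    (s : Fin (n + 1) → Subobject E) (hs : Monotone s)
    (s' : Fin (m + 1) → Subobject E) (hs' : Monotone s')
    (hHN : IsHNFiltration (slopeOf r d) s hs)
    (hHN' : IsHNFiltration (slopeOf r d) s' hs')
    {t : ℕ} (ht : t < n) (ht' : t < m)
    (heq : s ⟨t, by omega⟩ = s' ⟨t, by omega⟩) :
    slopeOf r d (factor s' hs' ⟨t, ht'⟩) ≤ slopeOf r d (factor s hs ⟨t, ht⟩) := by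
  have hlt' : s' (Fin.castSucc ⟨t, ht'⟩) < s' (Fin.succ ⟨t, ht'⟩) :=
    HN.lt_of_factor_nonzero s' hs' ⟨t, ht'⟩ (hHN'.2.2.1 ⟨t, ht'⟩).1
  have hAt : s' (Fin.castSucc ⟨t, ht'⟩) ≤ s ⟨t, by omega⟩ := le_of_eq heq.symm
  have hBt : ¬ s' (Fin.succ ⟨t, ht'⟩) ≤ s ⟨t, by omega⟩ := by
    intro hB
    rw [heq] at hB
    exact absurd hB (not_le_of_gt hlt')
  obtain ⟨k, hk1, hk2⟩ := HN.key r d hradd hdadd hr hd s hs hHN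
    (s' (Fin.castSucc ⟨t, ht'⟩)) (s' (Fin.succ ⟨t, ht'⟩))
    (hs' (Fin.castSucc_lt_succ : Fin.castSucc ⟨t, ht'⟩ < Fin.succ ⟨t, ht'⟩).le) (hHN'.2.2.1 ⟨t, ht'⟩).1 (hHN'.2.2.1 ⟨t, ht'⟩).2
    ⟨t, by omega⟩ hAt hBt
  refine le_trans hk2 ?_
  rcases Nat.eq_or_lt_of_le hk1 with hkt | hkt
  · have : k = ⟨t, ht⟩ := Fin.ext hkt.symm
    rw [this]
  · exact le_of_lt (hHN.2.2.2 ⟨t, ht⟩ k hkt)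

/-- One-sided containment in the inductive step. -/
lemma HN.sub_step {E : C} {n m : ℕ}
    (s : Fin (n + 1) → Subobject E) (hs : Monotone s)
    (s' : Fin (m + 1) → Subobject E) (hs' : Monotone s')
    (hHN : IsHNFiltration (slopeOf r d) s hs)
    (hHN' : IsHNFiltration (slopeOf r d) s' hs')
    {t : ℕ} (ht : t < n) (ht' : t < m)
    (heq : s ⟨t, by omega⟩ = s' ⟨t, by omega⟩)
    (hμ : slopeOf r d (factor s' hs' ⟨t, ht'⟩) = slopeOf r d (factor s hs ⟨t, ht⟩)) :
    s' ⟨t + 1, by omega⟩ ≤ s ⟨t + 1, by omega⟩ := by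
  by_contra hB
  have hAt : s' (Fin.castSucc ⟨t, ht'⟩) ≤ s ⟨t + 1, by omega⟩ := by
    refine le_of_eq heq.symm |>.trans (hs ?_)
    show (t : ℕ) ≤ t + 1
    omega
  have hBt : ¬ s' (Fin.succ ⟨t, ht'⟩) ≤ s ⟨t + 1, by omega⟩ := hB
  obtain ⟨k, hk1, hk2⟩ := HN.key r d hradd hdadd hr hd s hs hHN
    (s' (Fin.castSucc ⟨t, ht'⟩)) (s' (Fin.succ ⟨t, ht'⟩))
    (hs' (Fin.castSucc_lt_succ : Fin.castSucc ⟨t, ht'⟩ < Fin.succ ⟨t, ht'⟩).le) (hHN'.2.2.1 ⟨t, ht'⟩).1 (hHN'.2.2.1 ⟨t, ht'⟩).2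
    ⟨t + 1, by omega⟩ hAt hBt
  have hk1' : t + 1 ≤ (k : ℕ) := hk1
  have hdec : slopeOf r d (factor s hs k) < slopeOf r d (factor s hs ⟨t, ht⟩) :=
    hHN.2.2.2 ⟨t, ht⟩ k (show (t : ℕ) < (k : ℕ) by omega)
  have : slopeOf r d (factor s' hs' ⟨t, ht'⟩) < slopeOf r d (factor s hs ⟨t, ht⟩) :=
    lt_of_le_of_lt hk2 hdec
  rw [hμ] at this
  exact lt_irrefl _ this

end Aux

/-- Harder–Narasimhan filtrations with respect to a stability function are
unique: two filtrations of `E` with semistable factors of strictly decreasing slopes have the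
same length and the same terms. -/
theorem HN_filtration_unique
    (r d : C → ℝ) (hradd : AdditiveOnSES r) (hdadd : AdditiveOnSES d)
    (hr : ∀ E : C, 0 ≤ r E) (hd : ∀ E : C, ¬ IsZero E → r E = 0 → 0 < d E)
    {E : C} {n m : ℕ}
    (s : Fin (n + 1) → Subobject E) (hs : Monotone s)
    (s' : Fin (m + 1) → Subobject E) (hs' : Monotone s')
    (hHN : IsHNFiltration (slopeOf r d) s hs)
    (hHN' : IsHNFiltration (slopeOf r d) s' hs') :
    n = m ∧ ∀ (i : Fin (n + 1)) (j : Fin (m + 1)), (i : ℕ) = (j : ℕ) → s i = s' j := by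
  have main : ∀ t : ℕ, ∀ (h1 : t ≤ n) (h2 : t ≤ m),
      s ⟨t, by omega⟩ = s' ⟨t, by omega⟩ := by
    intro t
    induction t with
    | zero =>
      intro _ _
      have e1 : (⟨0, by omega⟩ : Fin (n + 1)) = 0 := rfl
      have e2 : (⟨0, by omega⟩ : Fin (m + 1)) = 0 := rfl
      rw [e1, e2, hHN.1, hHN'.1]
    | succ t ih =>
      intro h1 h2
      have ht : t < n := h1
      have ht' : t < m := h2
      have heq : s ⟨t, by omega⟩ = s' ⟨t, by omega⟩ := ih (by omega) (by omega)
      have hμeq : slopeOf r d (factor s' hs' ⟨t, ht'⟩) = slopeOf r d (factor s hs ⟨t, ht⟩) :=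
        le_antisymm
          (HN.slope_step r d hradd hdadd hr hd s hs s' hs' hHN hHN' ht ht' heq)
          (HN.slope_step r d hradd hdadd hr hd s' hs' s hs hHN' hHN ht' ht heq.symm)
      have c1 : s' ⟨t + 1, by omega⟩ ≤ s ⟨t + 1, by omega⟩ :=
        HN.sub_step r d hradd hdadd hr hd s hs s' hs' hHN hHN' ht ht' heq hμeq
      have c2 : s ⟨t + 1, by omega⟩ ≤ s' ⟨t + 1, by omega⟩ :=
        HN.sub_step r d hradd hdadd hr hd s' hs' s hs hHN' hHN ht' ht heq.symm hμeq.symm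
      exact le_antisymm c2 c1
  have hnm : n = m := by
    by_contra hne
    rcases Nat.lt_or_ge n m with h | h
    · have heq := main n le_rfl (by omega)
      have htop : s ⟨n, by omega⟩ = ⊤ := hHN.2.1
      have h2 : s' (Fin.castSucc ⟨n, h⟩) = ⊤ := heq ▸ htop
      have hlt := HN.lt_of_factor_nonzero s' hs' ⟨n, h⟩ (hHN'.2.2.1 ⟨n, h⟩).1
      rw [h2] at hlt
      exact not_top_lt hlt
    · have hmn : m < n := by omega
      have heq := main m (by omega) le_rfl
      have htop : s' ⟨m, by omega⟩ = ⊤ := hHN'.2.1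
      have h2 : s (Fin.castSucc ⟨m, hmn⟩) = ⊤ := heq.symm ▸ htop
      have hlt := HN.lt_of_factor_nonzero s hs ⟨m, hmn⟩ (hHN.2.2.1 ⟨m, hmn⟩).1
      rw [h2] at hlt
      exact not_top_lt hlt
  subst hnm
  refine ⟨rfl, ?_⟩
  intro i j hij
  have hij' : i = j := Fin.ext hij
  subst hij'
  exact main i.1 (by omega) (by omega)
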